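/- arXiv:2310.00864 — 2 statements merged into one kernel-verified Lean document; each statement's English description precedes it below -/
import Mathlib

section
/- Let K ≥ 1 be an integer and w : {−1,1}^K → ℝ, and define the conditional ψ-risk C_w(z) = Σ_{a ∈ {−1,1}^K} w(a) ψ(a ⊙ z) for z ∈ ℝ^K. Then the infimum of C_w over z ∈ ℝ^K equals Σ_{a ∈ {−1,1}^K} w(a) − max(0, max_{a ∈ {−1,1}^K} w(a)), and this infimum is attained. -/
/-- `Tgen s z = max (s - z 1, ..., s - z K, 0)`, the function `T_s` from the paper. -/
noncomputable def Tgen {K : ℕ} (s : ℝ) (z : Fin K → ℝ) : ℝ :=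
  Finset.fold (· ⊔ ·) 0 (fun k => s - z k) Finset.univ

/-- The generalized ψ-loss: `ψ z = T₁ z - T₀ z`. -/
noncomputable def psiLoss {K : ℕ} (z : Fin K → ℝ) : ℝ :=
  Tgen 1 z - Tgen 0 z

open scoped Classical in
/-- The set of sign vectors `{-1, 1}^K`, as a finset of `Fin K → ℝ`. -/
noncomputable def signVecs (K : ℕ) : Finset (Fin K → ℝ) :=
  Finset.image (fun (b : Fin K → Bool) (k : Fin K) => if b k then (1 : ℝ) else -1)
    Finset.univ

lemma mem_signVecs {K : ℕ} (a : Fin K → ℝ) :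
    a ∈ signVecs K ↔ ∀ k, a k = 1 ∨ a k = -1 := by
  classical
  unfold signVecs
  constructor
  · intro h k
    rw [Finset.mem_image] at h
    obtain ⟨b, -, rfl⟩ := h
    by_cases hb : b k <;> simp [hb]
  · intro h
    rw [Finset.mem_image]
    refine ⟨fun k => decide (a k = 1), Finset.mem_univ _, ?_⟩
    funext k
    rcases h k with h1 | h1 <;> norm_num [h1]

lemma signVecs_nonempty (K : ℕ) : (signVecs K).Nonempty :=
  ⟨fun _ => 1, (mem_signVecs _).mpr fun _ => Or.inl rfl⟩

/-! Since `0 ≤ ψ ≤ 1`, with `ψ y = 1` as soon as some `y k ≤ 0`, the defect `1 - ψ (a ⊙ z)` is nonzero only for the single sign vector `a` with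
`a k z k > 0` for all `k`. Hence `Σ w - C_w(z) = Σ_a w a (1 - ψ (a ⊙ z)) ≤ max 0 (max w)`.
The bound is attained at `z = a*` for a maximiser `a*` of `w` (then `ψ (a ⊙ a*)` is `0` for
`a = a*` and `1` otherwise), or at `z = 0` when `max w ≤ 0` (then every `ψ (a ⊙ 0)` is `1`). -/

/-- The conditional `ψ`-risk `C_w` of the paper. -/
noncomputable def psiRisk {K : ℕ} (w : (Fin K → ℝ) → ℝ) (z : Fin K → ℝ) : ℝ :=
  ∑ a ∈ signVecs K, w a * psiLoss (fun k => a k * z k)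

section Tgen

variable {K : ℕ} {s t : ℝ} {z : Fin K → ℝ}

lemma Tgen_le_iff {c : ℝ} : Tgen s z ≤ c ↔ 0 ≤ c ∧ ∀ k, s - z k ≤ c := by
  simp [Tgen, Finset.fold_max_le]

lemma Tgen_nonneg : 0 ≤ Tgen s z :=
  (Finset.le_fold_max _).2 (Or.inl le_rfl)

lemma sub_le_Tgen (k : Fin K) : s - z k ≤ Tgen s z :=
  (Finset.le_fold_max _).2 (Or.inr ⟨k, Finset.mem_univ k, le_rfl⟩)

lemma Tgen_mono (h : s ≤ t) : Tgen s z ≤ Tgen t z :=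
  Tgen_le_iff.2 ⟨Tgen_nonneg, fun k => (sub_le_sub_right h _).trans (sub_le_Tgen k)⟩

lemma Tgen_sub_Tgen_le (h : s ≤ t) : Tgen t z - Tgen s z ≤ t - s := by
  suffices Tgen t z ≤ Tgen s z + (t - s) by linarith
  refine Tgen_le_iff.2 ⟨by linarith [Tgen_nonneg (s := s) (z := z)], fun k => ?_⟩
  linarith [sub_le_Tgen (s := s) (z := z) k]

lemma Tgen_sub_Tgen_eq {k₀ : Fin K} (h : s ≤ t) (hk₀ : z k₀ ≤ s) :
    Tgen t z - Tgen s z = t - s := by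
  refine le_antisymm (Tgen_sub_Tgen_le h) ?_
  suffices Tgen s z ≤ Tgen t z - (t - s) by linarith
  refine Tgen_le_iff.2 ⟨by linarith [sub_le_Tgen (s := t) (z := z) k₀], fun k => ?_⟩
  linarith [sub_le_Tgen (s := t) (z := z) k]

lemma Tgen_eq_zero (h : ∀ k, s ≤ z k) : Tgen s z = 0 :=
  le_antisymm (Tgen_le_iff.2 ⟨le_rfl, fun k => by linarith [h k]⟩) Tgen_nonneg

end Tgen

section psiLoss

variable {K : ℕ} {y : Fin K → ℝ}

lemma psiLoss_nonneg : 0 ≤ psiLoss y :=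
  sub_nonneg.2 (Tgen_mono zero_le_one)

lemma psiLoss_le_one : psiLoss y ≤ 1 :=
  (Tgen_sub_Tgen_le zero_le_one).trans_eq (sub_zero 1)

lemma psiLoss_eq_one {k₀ : Fin K} (hk₀ : y k₀ ≤ 0) : psiLoss y = 1 :=
  (Tgen_sub_Tgen_eq zero_le_one hk₀).trans (sub_zero 1)

lemma psiLoss_eq_zero (h : ∀ k, 1 ≤ y k) : psiLoss y = 0 := by
  rw [psiLoss, Tgen_eq_zero h, Tgen_eq_zero fun k => zero_le_one.trans (h k), sub_zero]

end psiLoss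

section signVecs

variable {K : ℕ} {a b : Fin K → ℝ}

lemma mul_self_eq_one_of_mem_signVecs (ha : a ∈ signVecs K) (k : Fin K) : a k * a k = 1 := by
  rcases (mem_signVecs a).1 ha k with h | h <;> rw [h] <;> norm_num

lemma eq_of_mem_signVecs_of_forall_mul_pos (ha : a ∈ signVecs K) (hb : b ∈ signVecs K)
    (h : ∀ k, 0 < a k * b k) : a = b := by
  funext k
  have := h k
  rcases (mem_signVecs a).1 ha k with h₁ | h₁ <;> rcases (mem_signVecs b).1 hb k with h₂ | h₂ <;>
    simp only [h₁, h₂] at this ⊢ <;> norm_num at this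

lemma eq_of_psiLoss_ne_one (ha : a ∈ signVecs K) (hb : b ∈ signVecs K) {z : Fin K → ℝ}
    (hza : psiLoss (fun k => a k * z k) ≠ 1) (hzb : psiLoss (fun k => b k * z k) ≠ 1) :
    a = b := by
  have hpos : ∀ c : Fin K → ℝ, psiLoss (fun k => c k * z k) ≠ 1 → ∀ k, 0 < c k * z k :=
    fun c hc k => not_le.1 fun hk => hc (psiLoss_eq_one hk)
  refine eq_of_mem_signVecs_of_forall_mul_pos ha hb fun k => ?_
  have := mul_pos (hpos a hza k) (hpos b hzb k)
  exact pos_of_mul_pos_left (a := a k * b k) (b := z k * z k) (by linarith) (mul_self_nonneg _)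

end signVecs

lemma Finset.sum_le_one_of_subsingleton_support {ι : Type*} {s : Finset ι} {f : ι → ℝ}
    (hf : ∀ i ∈ s, f i ≤ 1) (h : ∀ i ∈ s, ∀ j ∈ s, f i ≠ 0 → f j ≠ 0 → i = j) :
    ∑ i ∈ s, f i ≤ 1 := by
  by_cases hzero : ∀ i ∈ s, f i = 0
  · simp [Finset.sum_eq_zero hzero]
  obtain ⟨i, hi, hfi⟩ := by simpa only [not_forall] using hzero
  rw [Finset.sum_eq_single_of_mem i hi fun j hj hji =>
    not_not.1 fun hfj => hji (h j hj i hi hfj hfi)]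
  exact hf i hi

lemma Finset.sum_mul_le_of_sum_le_one {ι : Type*} {s : Finset ι} {w f : ι → ℝ} {M : ℝ}
    (hM : 0 ≤ M) (hw : ∀ i ∈ s, w i ≤ M) (hf : ∀ i ∈ s, 0 ≤ f i) (hsum : ∑ i ∈ s, f i ≤ 1) :
    ∑ i ∈ s, w i * f i ≤ M :=
  calc ∑ i ∈ s, w i * f i ≤ ∑ i ∈ s, M * f i :=
        Finset.sum_le_sum fun i hi => mul_le_mul_of_nonneg_right (hw i hi) (hf i hi)
    _ = M * ∑ i ∈ s, f i := by rw [Finset.mul_sum]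
    _ ≤ M := mul_le_of_le_one_right hM hsum

section psiRisk

variable {K : ℕ} (w : (Fin K → ℝ) → ℝ)

lemma sum_one_sub_psiLoss_le_one (z : Fin K → ℝ) :
    ∑ a ∈ signVecs K, (1 - psiLoss (fun k => a k * z k)) ≤ 1 :=
  Finset.sum_le_one_of_subsingleton_support
    (fun a _ => by linarith [psiLoss_nonneg (y := fun k => a k * z k)])
    fun _ ha _ hb hza hzb =>
      eq_of_psiLoss_ne_one ha hb (fun h => hza (by rw [h, sub_self]))
        (fun h => hzb (by rw [h, sub_self]))

lemma sum_sub_le_psiRisk (z : Fin K → ℝ) :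
    (∑ a ∈ signVecs K, w a) - max 0 ((signVecs K).sup' (signVecs_nonempty K) w) ≤
      psiRisk w z := by
  have hdefect : ∑ a ∈ signVecs K, w a * (1 - psiLoss (fun k => a k * z k))
      ≤ max 0 ((signVecs K).sup' (signVecs_nonempty K) w) :=
    Finset.sum_mul_le_of_sum_le_one (le_max_left _ _)
      (fun a ha => (Finset.le_sup' w ha).trans (le_max_right _ _))
      (fun a _ => by linarith [psiLoss_le_one (y := fun k => a k * z k)])
      (sum_one_sub_psiLoss_le_one z)
  simp only [mul_one_sub, Finset.sum_sub_distrib] at hdefect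
  rw [psiRisk]
  linarith

lemma psiRisk_of_mem_signVecs {b : Fin K → ℝ} (hb : b ∈ signVecs K) :
    psiRisk w b = (∑ a ∈ signVecs K, w a) - w b := by
  have hself : psiLoss (fun k => b k * b k) = 0 :=
    psiLoss_eq_zero fun k => (mul_self_eq_one_of_mem_signVecs hb k).ge
  have hterm : ∀ a ∈ signVecs K,
      w a * psiLoss (fun k => a k * b k) = w a - if a = b then w a else 0 := by
    intro a ha
    split_ifs with hab
    · rw [hab, hself]
      ring
    · have hne : psiLoss (fun k => a k * b k) = 1 := by
        by_contra h
        exact hab (eq_of_psiLoss_ne_one ha hb h (by rw [hself]; exact zero_ne_one))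
      rw [hne]
      ring
  rw [psiRisk, Finset.sum_congr rfl hterm, Finset.sum_sub_distrib, Finset.sum_ite_eq' _ _ _,
    if_pos hb]

lemma psiRisk_zero (hK : 1 ≤ K) : psiRisk w 0 = ∑ a ∈ signVecs K, w a := by
  refine Finset.sum_congr rfl fun a _ => ?_
  rw [psiLoss_eq_one (k₀ := ⟨0, hK⟩) (by simp), mul_one]

end psiRisk

theorem stmt11 (K : ℕ) (hK : 1 ≤ K) (w : (Fin K → ℝ) → ℝ) :
    IsLeast
      (Set.range fun z : Fin K → ℝ =>
        ∑ a ∈ signVecs K, w a * psiLoss (fun k => a k * z k))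
      ((∑ a ∈ signVecs K, w a)
        - max 0 ((signVecs K).sup' (signVecs_nonempty K) w)) := by
  refine ⟨?_, Set.forall_mem_range.2 (sum_sub_le_psiRisk w)⟩
  obtain ⟨b, hb, hwb⟩ := Finset.exists_mem_eq_sup' (signVecs_nonempty K) w
  rcases le_total ((signVecs K).sup' (signVecs_nonempty K) w) 0 with hmax | hmax
  · exact ⟨0, by rw [max_eq_left hmax, sub_zero]; exact psiRisk_zero w hK⟩
  · exact ⟨b, by rw [max_eq_right hmax, hwb]; exact psiRisk_of_mem_signVecs w hb⟩
end

section
/- (Excess risk bound, integrated form of Theorem 2.) Let K ≥ 1 be an integer, (X, Σ_X, μ) a measure space, and W : X × {−1,1}^K → ℝ such that x ↦ W(x,a) is measurable and integrable for each a ∈ {−1,1}^K. Let f : X → ℝ^K be measurable with f(x)_k ≠ 0 for μ-a.e. x and every k, and let d_f(x) denote the unique a ∈ {−1,1}^K with a_k f(x)_k > 0 for all k. Define the 0-1 risk R(d_f) = ∫ Σ_{a ≠ d_f(x)} W(x,a) dμ(x), the ψ-risk R_ψ(f) = ∫ Σ_{a ∈ {−1,1}^K} W(x,a) ψ(a ⊙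 f(x)) dμ(x), the Bayes risk R* = ∫ (Σ_{a} W(x,a) − max_{a} W(x,a)) dμ(x), and R_ψ* = ∫ (Σ_{a} W(x,a) − max(0, max_{a} W(x,a))) dμ(x). Assume μ-a.e. that max_{a} W(x,a) ≥ 0 and W(x, d_f(x)) ≥ 0, and that x ↦ Σ_a W(x,a) ψ(a ⊙ f(x)) is integrable. Then R* = R_ψ* and R(d_f) − R* ≤ R_ψ(f) − R_ψ*. -/
/-!
Pointwise, `ψ(a ⊙ f x)` is `1` for every sign vector `a` that disagrees with `d_f(x)` in some
coordinate (there `a_k f(x)_k < 0`, which lifts `T_0` above `0`, so `T_1 = T_0 + 1`), and it is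
nonnegative for `a = d_f(x)` (`T_s` is monotone in `s`). With `W(x, d_f(x)) ≥ 0` this gives
`∑_{a ≠ d_f(x)} W(x,a) ≤ ∑_a W(x,a) ψ(a ⊙ f x)`, and integrating yields the excess risk bound;
`R* = R_ψ*` because `max_a W(x,a) ≥ 0` almost everywhere.
-/

namespace Tgen

variable {K : ℕ}

lemma le_iff {s c : ℝ} {z : Fin K → ℝ} : Tgen s z ≤ c ↔ 0 ≤ c ∧ ∀ k, s - z k ≤ c := by
  simp [Tgen, Finset.fold_max_le]

lemma sub_le {s : ℝ} {z : Fin K → ℝ} (k : Fin K) : s - z k ≤ Tgen s z :=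
  (Finset.le_fold_max _).mpr (Or.inr ⟨k, Finset.mem_univ k, le_rfl⟩)

lemma nonneg (s : ℝ) (z : Fin K → ℝ) : 0 ≤ Tgen s z :=
  (Finset.le_fold_max _).mpr (Or.inl le_rfl)

lemma mono {s t : ℝ} (hst : s ≤ t) (z : Fin K → ℝ) : Tgen s z ≤ Tgen t z :=
  le_iff.mpr ⟨nonneg t z, fun k => (sub_le_sub_right hst _).trans (sub_le k)⟩

lemma zero_add_one_of_neg {z : Fin K → ℝ} {k : Fin K} (hk : z k < 0) :
    Tgen 0 z + 1 = Tgen 1 z := by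
  refine le_antisymm ?_ ?_
  · have hone : 1 ≤ Tgen 1 z := by linarith [sub_le (s := 1) (z := z) k]
    have : Tgen 0 z ≤ Tgen 1 z - 1 :=
      le_iff.mpr ⟨sub_nonneg.mpr hone, fun j => by linarith [sub_le (s := 1) (z := z) j]⟩
    linarith
  · exact le_iff.mpr ⟨by linarith [nonneg 0 z], fun j => by linarith [sub_le (s := 0) (z := z) j]⟩

end Tgen

section psiLoss

variable {K : ℕ}

lemma psiLoss_nonneg_s15 (z : Fin K → ℝ) : 0 ≤ psiLoss z :=
  sub_nonneg.mpr (Tgen.mono zero_le_one z)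

lemma psiLoss_eq_one_of_neg {z : Fin K → ℝ} {k : Fin K} (hk : z k < 0) : psiLoss z = 1 := by
  rw [psiLoss, ← Tgen.zero_add_one_of_neg hk, add_sub_cancel_left]

lemma sum_filter_ne_le_sum_mul_psiLoss {S : Finset (Fin K → ℝ)} {w : (Fin K → ℝ) → ℝ}
    {z d : Fin K → ℝ} (hd : d ∈ S) (hwd : 0 ≤ w d)
    (hS : ∀ a ∈ S, a ≠ d → ∃ k, a k * z k < 0) :
    ∑ a ∈ S.filter (fun a => a ≠ d), w a ≤ ∑ a ∈ S, w a * psiLoss (fun k => a k * z k) := by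
  rw [Finset.filter_ne', ← Finset.sum_erase_add _ _ hd]
  have hloss : ∀ a ∈ S.erase d, w a * psiLoss (fun k => a k * z k) = w a := fun a ha => by
    obtain ⟨hne, haS⟩ := Finset.mem_erase.mp ha
    obtain ⟨k, hk⟩ := hS a haS hne
    rw [psiLoss_eq_one_of_neg (z := fun k => a k * z k) hk, mul_one]
  rw [Finset.sum_congr rfl hloss]
  exact le_add_of_nonneg_right (mul_nonneg hwd (psiLoss_nonneg_s15 _))

end psiLoss

section signOf

variable {K : ℕ}

noncomputable def signOf (z : Fin K → ℝ) : Fin K → ℝ := fun k => if 0 < z k then 1 else -1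

lemma signOf_mem_signVecs (z : Fin K → ℝ) : signOf z ∈ signVecs K :=
  (mem_signVecs _).mpr fun k => by unfold signOf; split_ifs <;> simp

lemma exists_mul_neg_of_ne_signOf {z a : Fin K → ℝ} (hz : ∀ k, z k ≠ 0) (ha : a ∈ signVecs K)
    (hne : a ≠ signOf z) : ∃ k, a k * z k < 0 := by
  obtain ⟨k, hk⟩ := Function.ne_iff.mp hne
  refine ⟨k, ?_⟩
  unfold signOf at hk
  rcases (mem_signVecs a).mp ha k with h | h <;> rw [h] at hk ⊢ <;>
    rcases (hz k).lt_or_gt with hzk | hzk <;> simp_all [not_lt_of_gt]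

lemma measurable_signOf : Measurable (signOf : (Fin K → ℝ) → Fin K → ℝ) :=
  measurable_pi_lambda _ fun k =>
    Measurable.ite (measurableSet_lt measurable_const (measurable_pi_apply k))
      measurable_const measurable_const

end signOf

open MeasureTheory in
lemma integrable_sum_filter_ne {X α : Type*} [MeasurableSpace X] [MeasurableSpace α]
    [MeasurableSingletonClass α] [DecidableEq α] {μ : Measure X} {S : Finset α}
    {W : X → α → ℝ} {d : X → α}
    (hd : Measurable d) (hW : ∀ a ∈ S, Integrable (fun x => W x a) μ) :
    Integrable (fun x => ∑ a ∈ S.filter (fun a => a ≠ d x), W x a) μ := by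
  have hind : (fun x => ∑ a ∈ S.filter (fun a => a ≠ d x), W x a)
      = fun x => ∑ a ∈ S, Set.indicator (d ⁻¹' {a})ᶜ (fun x => W x a) x := by
    funext x
    rw [Finset.sum_filter]
    refine Finset.sum_congr rfl fun a _ => ?_
    by_cases h : a = d x
    · simp [h]
    · simp [Set.indicator, h, Ne.symm h]
  rw [hind]
  exact integrable_finsetSum _ fun a ha =>
    (hW a ha).indicator (hd (measurableSet_singleton a)).compl

open MeasureTheory in
open scoped Classical in
theorem stmt15_general (K : ℕ) {X : Type*} [MeasurableSpace X]
    (μ : Measure X) (W : X → (Fin K → ℝ) → ℝ)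
    (hWint : ∀ a ∈ signVecs K, Integrable (fun x => W x a) μ)
    (f : X → Fin K → ℝ) (hf : Measurable f)
    (hfz : ∀ᵐ x ∂μ, ∀ k, f x k ≠ 0)
    -- `df x` is the unique sign vector `a` with `a k * f x k > 0` for all `k`
    (df : X → Fin K → ℝ)
    (hdf : df = fun x k => if 0 < f x k then (1 : ℝ) else -1)
    (hsup : ∀ᵐ x ∂μ, 0 ≤ (signVecs K).sup' (signVecs_nonempty K) (fun a => W x a))
    (hWdf : ∀ᵐ x ∂μ, 0 ≤ W x (df x))
    (hint : Integrable
      (fun x => ∑ a ∈ signVecs K, W x a * psiLoss (fun k => a k * f x k)) μ) :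
    -- `R* = R_ψ*`
    (∫ x, ((∑ a ∈ signVecs K, W x a)
          - (signVecs K).sup' (signVecs_nonempty K) (fun a => W x a)) ∂μ)
      = (∫ x, ((∑ a ∈ signVecs K, W x a)
          - max 0 ((signVecs K).sup' (signVecs_nonempty K) (fun a => W x a))) ∂μ)
    ∧
    -- `R(d_f) - R* ≤ R_ψ(f) - R_ψ*`
    (∫ x, (∑ a ∈ (signVecs K).filter (fun a => a ≠ df x), W x a) ∂μ)
        - (∫ x, ((∑ a ∈ signVecs K, W x a)
            - (signVecs K).sup' (signVecs_nonempty K) (fun a => W x a)) ∂μ)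
      ≤ (∫ x, (∑ a ∈ signVecs K, W x a * psiLoss (fun k => a k * f x k)) ∂μ)
        - (∫ x, ((∑ a ∈ signVecs K, W x a)
            - max 0 ((signVecs K).sup' (signVecs_nonempty K) (fun a => W x a))) ∂μ) := by
  obtain rfl : df = fun x => signOf (f x) := hdf
  have hbayes : ∫ x, ((∑ a ∈ signVecs K, W x a)
        - (signVecs K).sup' (signVecs_nonempty K) (fun a => W x a)) ∂μ
      = ∫ x, ((∑ a ∈ signVecs K, W x a)
        - max 0 ((signVecs K).sup' (signVecs_nonempty K) (fun a => W x a))) ∂μ :=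
    integral_congr_ae <| hsup.mono fun x hx => by simp only [max_eq_right hx]
  refine ⟨hbayes, ?_⟩
  rw [hbayes]
  refine sub_le_sub_right (integral_mono_ae
    (integrable_sum_filter_ne (measurable_signOf.comp hf) hWint) hint ?_) _
  filter_upwards [hfz, hWdf] with x hx hWx
  exact sum_filter_ne_le_sum_mul_psiLoss (signOf_mem_signVecs _) hWx
    fun a ha hne => exists_mul_neg_of_ne_signOf hx ha hne

open MeasureTheory in
open scoped Classical in
theorem stmt15 (K : ℕ) (hK : 1 ≤ K) {X : Type*} [MeasurableSpace X]
    (μ : Measure X) (W : X → (Fin K → ℝ) → ℝ)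
    (hWmeas : ∀ a ∈ signVecs K, Measurable fun x => W x a)
    (hWint : ∀ a ∈ signVecs K, Integrable (fun x => W x a) μ)
    (f : X → Fin K → ℝ) (hf : Measurable f)
    (hfz : ∀ᵐ x ∂μ, ∀ k, f x k ≠ 0)
    -- `df x` is the unique sign vector `a` with `a k * f x k > 0` for all `k`
    (df : X → Fin K → ℝ)
    (hdf : df = fun x k => if 0 < f x k then (1 : ℝ) else -1)
    (hsup : ∀ᵐ x ∂μ, 0 ≤ (signVecs K).sup' (signVecs_nonempty K) (fun a => W x a))
    (hWdf : ∀ᵐ x ∂μ, 0 ≤ W x (df x))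
    (hint : Integrable
      (fun x => ∑ a ∈ signVecs K, W x a * psiLoss (fun k => a k * f x k)) μ) :
    -- `R* = R_ψ*`
    (∫ x, ((∑ a ∈ signVecs K, W x a)
          - (signVecs K).sup' (signVecs_nonempty K) (fun a => W x a)) ∂μ)
      = (∫ x, ((∑ a ∈ signVecs K, W x a)
          - max 0 ((signVecs K).sup' (signVecs_nonempty K) (fun a => W x a))) ∂μ)
    ∧
    -- `R(d_f) - R* ≤ R_ψ(f) - R_ψ*`
    (∫ x, (∑ a ∈ (signVecs K).filter (fun a => a ≠ df x), W x a) ∂μ)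
        - (∫ x, ((∑ a ∈ signVecs K, W x a)
            - (signVecs K).sup' (signVecs_nonempty K) (fun a => W x a)) ∂μ)
      ≤ (∫ x, (∑ a ∈ signVecs K, W x a * psiLoss (fun k => a k * f x k)) ∂μ)
        - (∫ x, ((∑ a ∈ signVecs K, W x a)
            - max 0 ((signVecs K).sup' (signVecs_nonempty K) (fun a => W x a))) ∂μ) :=
  stmt15_general K μ W hWint f hf hfz df hdf hsup hWdf hint
end
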